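/- Let C be an (n,k) convolutional code with column distances d_j^c. If d_j^c(C) = (j+1)(n−k) + 1 for some j, then d_i^c(C) = (i+1)(n−k) + 1 for all i ≤ j. -/

import Mathlib

/-- The truncated sliding parity-check matrix: the (j+1)(n-k) × (j+1)n lower
block triangular Toeplitz matrix whose block (r,s) equals H_{r-s} for r ≥ s and
0 otherwise, built from the coefficients H_0, H_1, ... of H(z). -/
def slidingParity {F : Type*} [Field F] (n k : ℕ) (hk : k < n)
    (H : ℕ → Matrix (Fin (n - k)) (Fin n) F) (j : ℕ) :
    Matrix (Fin ((j + 1) * (n - k))) (Fin ((j + 1) * n)) F :=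
  Matrix.of fun a b =>
    if (b : ℕ) / n ≤ (a : ℕ) / (n - k) then
      H ((a : ℕ) / (n - k) - (b : ℕ) / n)
        ⟨(a : ℕ) % (n - k), Nat.mod_lt _ (by omega)⟩
        ⟨(b : ℕ) % n, Nat.mod_lt _ (by omega)⟩
    else 0

/-- Hamming weight of a vector. -/
noncomputable def hammingWt {F : Type*} {ι : Type*} [Zero F] (v : ι → F) : ℕ :=
  Nat.card {i // v i ≠ 0}

/-- The j-th column distance: the minimal Hamming weight of a truncated codeword
(v_0,...,v_j) ∈ F^{(j+1)n} lying in the kernel of the sliding parity-check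
matrix and with v_0 ≠ 0 (i.e. nonzero in the first block of n coordinates). -/
noncomputable def colDist {F : Type*} [Field F] (n k : ℕ) (hk : k < n)
    (H : ℕ → Matrix (Fin (n - k)) (Fin n) F) (j : ℕ) : ℕ :=
  sInf {w | ∃ v : Fin ((j + 1) * n) → F,
    Matrix.mulVec (slidingParity n k hk H j) v = 0 ∧
    (∃ t : Fin ((j + 1) * n), (t : ℕ) < n ∧ v t ≠ 0) ∧
    hammingWt v = w}

/-!
Since `H₀` has full row rank, some set `S` of `n - k` of its columns spans `F^{n-k}`. Hence a
truncated codeword `(v₀, …, v_i)` extends block by block to `(v₀, …, v_j)`: the next block must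
solve `H₀ x = -(terms already fixed)`, and a solution supported on `S` has weight at most `n - k`.
So `d_j ≤ d_i + (j - i)(n - k)`, and `d_j = (j + 1)(n - k) + 1` forces `d_i ≥ (i + 1)(n - k) + 1`.
Conversely, extending `v₀ = e_{t₀} - x` with `t₀ ∉ S`, `x` supported on `S` and `H₀ x = H₀ e_{t₀}`
gives a codeword of weight at most `(i + 1)(n - k) + 1`.
-/

open Finset Matrix

theorem Matrix.exists_finset_card_eq_forall_exists_mulVec_eq {K : Type*} [Field K] {m n : ℕ}
    (A : Matrix (Fin m) (Fin n) K) (hA : A.rank = m) :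
    ∃ S : Finset (Fin n), #S = m ∧ ∀ b, ∃ x, A *ᵥ x = b ∧ ∀ t ∉ S, x t = 0 := by
  classical
  have hspan : Submodule.span K (Set.range A.col) = ⊤ := by
    apply Submodule.eq_top_of_finrank_eq
    rw [← rank_eq_finrank_span_cols, hA, Module.finrank_fin_fun]
  obtain ⟨κ, a, ha, hspan', hli⟩ := exists_linearIndependent' K A.col
  have : Finite κ := Finite.of_injective a ha
  have := Fintype.ofFinite κ
  refine ⟨univ.map ⟨a, ha⟩, ?_, fun b => ?_⟩
  · rw [card_map, card_univ, linearIndependent_iff_card_eq_finrank_span.mp hli, Set.finrank,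
      hspan', hspan, finrank_top, Module.finrank_fin_fun]
  · obtain ⟨c, hc⟩ := (Submodule.mem_span_range_iff_exists_fun K).mp
      (show b ∈ Submodule.span K (Set.range (A.col ∘ a)) by rw [hspan', hspan]; trivial)
    refine ⟨∑ i, c i • Pi.single (a i) 1, ?_, fun t ht => ?_⟩
    · simp [mulVec_sum, mulVec_smul, ← hc]
    · simp only [Finset.sum_apply, Pi.smul_apply, smul_eq_mul]
      refine sum_eq_zero fun i _ => ?_
      rw [Pi.single_eq_of_ne, mul_zero]
      rintro rfl
      exact ht (mem_map_of_mem _ (mem_univ i))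

section BlockVector

theorem hammingWt_le_card {ι : Type*} [Fintype ι] {R : Type*} [Zero R] {v : ι → R} {S : Finset ι}
    (h : ∀ t ∉ S, v t = 0) : hammingWt v ≤ #S := by
  classical
  rw [hammingWt, Nat.card_eq_fintype_card, Fintype.card_subtype]
  exact card_le_card fun t ht => by_contra fun htS => (mem_filter.mp ht).2 (h t htS)

variable {R : Type*} {n : ℕ}

/-- Block `r < N` of `u` occupies the coordinates `r n, …, r n + n - 1`, as in `slidingParity`. -/
def blockVec (N : ℕ) (u : ℕ → Fin n → R) : Fin (N * n) → R :=
  fun a => u (finProdFinEquiv.symm a).1 (finProdFinEquiv.symm a).2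

@[simp]
theorem blockVec_finProdFinEquiv (N : ℕ) (u : ℕ → Fin n → R) (p : Fin N × Fin n) :
    blockVec N u (finProdFinEquiv p) = u p.1 p.2 := by
  simp [blockVec]

theorem exists_blockVec_eq [Zero R] {N : ℕ} (v : Fin (N * n) → R) :
    ∃ u : ℕ → Fin n → R, blockVec N u = v := by
  refine ⟨fun r t => if h : r < N then v (finProdFinEquiv (⟨r, h⟩, t)) else 0, funext fun a => ?_⟩
  obtain ⟨p, rfl⟩ := finProdFinEquiv.surjective a
  simp

theorem blockVec_eq_zero_iff [Zero R] {N : ℕ} {u : ℕ → Fin n → R} :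
    blockVec N u = 0 ↔ ∀ r < N, u r = 0 := by
  constructor
  · intro h r hr
    funext t
    simpa using congrFun h (finProdFinEquiv (⟨r, hr⟩, t))
  · intro h
    funext a
    obtain ⟨⟨r, t⟩, rfl⟩ := finProdFinEquiv.surjective a
    simp [h r r.isLt]

theorem exists_blockVec_ne_zero_iff [Zero R] {N : ℕ} (hN : 0 < N) {u : ℕ → Fin n → R} :
    (∃ a : Fin (N * n), (a : ℕ) < n ∧ blockVec N u a ≠ 0) ↔ u 0 ≠ 0 := by
  constructor
  · rintro ⟨a, ha, hua⟩ h0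
    obtain ⟨⟨r, t⟩, rfl⟩ := finProdFinEquiv.surjective a
    have hr : (r : ℕ) = 0 := by rw [finProdFinEquiv_apply_val] at ha; nlinarith
    simp [hr, h0] at hua
  · intro h0
    obtain ⟨t, ht⟩ := Function.ne_iff.mp h0
    exact ⟨finProdFinEquiv (⟨0, hN⟩, t), by simp, by simpa using ht⟩

theorem hammingWt_blockVec [Zero R] (N : ℕ) (u : ℕ → Fin n → R) :
    hammingWt (blockVec N u) = ∑ r ∈ range N, hammingWt (u r) := by
  have e : {a // blockVec N u a ≠ 0} ≃ Σ r : Fin N, {t // u r t ≠ 0} :=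
    (finProdFinEquiv.symm.subtypeEquiv fun a => Iff.rfl).trans
      (Equiv.subtypeProdEquivSigmaSubtype fun (r : Fin N) t => u r t ≠ 0)
  rw [hammingWt, Nat.card_congr e, Nat.card_sigma]
  exact Fin.sum_univ_eq_sum_range (fun r => hammingWt (u r)) N

end BlockVector

section Syndrome

variable {R : Type*} [Ring R] {m n : ℕ}

/-- The `r`-th coefficient of `H(z) u(z)`. -/
def syndrome (H : ℕ → Matrix (Fin m) (Fin n) R) (u : ℕ → Fin n → R) (r : ℕ) : Fin m → R :=
  ∑ s ∈ range (r + 1), H (r - s) *ᵥ u s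

theorem syndrome_congr (H : ℕ → Matrix (Fin m) (Fin n) R) {u u' : ℕ → Fin n → R} {r : ℕ}
    (h : ∀ s ≤ r, u s = u' s) : syndrome H u r = syndrome H u' r :=
  sum_congr rfl fun s hs => by rw [h s (Nat.lt_succ_iff.mp (mem_range.mp hs))]

theorem syndrome_eq_add (H : ℕ → Matrix (Fin m) (Fin n) R) (u : ℕ → Fin n → R) (r : ℕ) :
    syndrome H u r = ∑ s ∈ range r, H (r - s) *ᵥ u s + H 0 *ᵥ u r := by
  rw [syndrome, sum_range_succ, Nat.sub_self]

variable {H : ℕ → Matrix (Fin m) (Fin n) R} {S : Finset (Fin n)}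

theorem exists_codeword_extension (hS : ∀ b, ∃ x, H 0 *ᵥ x = b ∧ ∀ t ∉ S, x t = 0)
    {u : ℕ → Fin n → R} {i : ℕ} (hu : ∀ r ≤ i, syndrome H u r = 0) (d : ℕ) :
    ∃ u' : ℕ → Fin n → R, (∀ r ≤ i, u' r = u r) ∧ (∀ r ≤ i + d, syndrome H u' r = 0) ∧
      ∀ r, i < r → r ≤ i + d → ∀ t ∉ S, u' r t = 0 := by
  induction d with
  | zero => exact ⟨u, fun _ _ => rfl, hu, fun r h1 h2 => absurd h2 (by omega)⟩
  | succ d ih =>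
    obtain ⟨u', hagree, hsyn, hsupp⟩ := ih
    set N := i + d + 1
    obtain ⟨x, hx, hxS⟩ := hS (-∑ s ∈ range N, H (N - s) *ᵥ u' s)
    have hupd : ∀ r < N, Function.update u' N x r = u' r := fun r hr =>
      Function.update_of_ne hr.ne _ _
    refine ⟨Function.update u' N x, fun r hr => ?_, fun r hr => ?_, fun r h1 h2 => ?_⟩
    · rw [hupd r (by omega), hagree r hr]
    · obtain hr | rfl : r < N ∨ r = N := by omega
      · rw [syndrome_congr H fun s hs => hupd s (by omega)]
        exact hsyn r (by omega)
      · rw [syndrome_eq_add, Function.update_self, hx,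
          sum_congr rfl fun s hs => by rw [hupd s (mem_range.mp hs)], add_neg_cancel]
    · obtain h2 | rfl : r < N ∨ r = N := by omega
      · rw [hupd r h2]
        exact hsupp r h1 (by omega)
      · rw [Function.update_self]
        exact hxS

theorem exists_codeword_extension_weight_le (hS : ∀ b, ∃ x, H 0 *ᵥ x = b ∧ ∀ t ∉ S, x t = 0)
    {u : ℕ → Fin n → R} {i j : ℕ} (hu : ∀ r ≤ i, syndrome H u r = 0) (hij : i ≤ j) :
    ∃ u' : ℕ → Fin n → R, u' 0 = u 0 ∧ (∀ r ≤ j, syndrome H u' r = 0) ∧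
      ∑ r ∈ range (j + 1), hammingWt (u' r) ≤
        ∑ r ∈ range (i + 1), hammingWt (u r) + (j - i) * #S := by
  obtain ⟨u', hagree, hsyn, hsupp⟩ := exists_codeword_extension hS hu (j - i)
  refine ⟨u', hagree 0 (Nat.zero_le i), fun r hr => hsyn r (by omega : r ≤ i + (j - i)), ?_⟩
  have htail : ∑ r ∈ Ico (i + 1) (j + 1), hammingWt (u' r) ≤ (j - i) * #S := by
    have hbound : ∀ r ∈ Ico (i + 1) (j + 1), hammingWt (u' r) ≤ #S := fun r hr =>
      hammingWt_le_card (hsupp r (mem_Ico.mp hr).1 (by have := (mem_Ico.mp hr).2; omega))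
    simpa using sum_le_card_nsmul _ _ _ hbound
  rw [← sum_range_add_sum_Ico _ (by omega : i + 1 ≤ j + 1),
    sum_congr rfl fun r hr => by rw [hagree r (Nat.lt_succ_iff.mp (mem_range.mp hr))]]
  exact Nat.add_le_add_left htail _

end Syndrome

section SlidingParity

variable {F : Type*} [Field F] {n k : ℕ} (hk : k < n) (H : ℕ → Matrix (Fin (n - k)) (Fin n) F)

theorem slidingParity_finProdFinEquiv (j : ℕ) (r s : Fin (j + 1)) (ρ : Fin (n - k)) (t : Fin n) :
    slidingParity n k hk H j (finProdFinEquiv (r, ρ)) (finProdFinEquiv (s, t)) =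
      if (s : ℕ) ≤ r then H (r - s) ρ t else 0 := by
  have hdiv : ∀ {N : ℕ} (x : Fin N) (q : ℕ), (x + N * q : ℕ) / N = q := fun x q => by
    rw [Nat.add_mul_div_left _ _ x.pos, Nat.div_eq_of_lt x.isLt, zero_add]
  simp [slidingParity, hdiv, Nat.mod_eq_of_lt]

theorem slidingParity_mulVec_blockVec (j : ℕ) (u : ℕ → Fin n → F) :
    slidingParity n k hk H j *ᵥ blockVec (j + 1) u = blockVec (j + 1) (syndrome H u) := by
  funext a
  obtain ⟨⟨r, ρ⟩, rfl⟩ := finProdFinEquiv.surjective a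
  rw [blockVec_finProdFinEquiv, mulVec, dotProduct, ← finProdFinEquiv.sum_comp,
    Fintype.sum_prod_type]
  simp only [slidingParity_finProdFinEquiv, blockVec_finProdFinEquiv, ite_mul, zero_mul,
    sum_ite_irrel, sum_const_zero]
  have hr : (range (j + 1)).filter (· ≤ (r : ℕ)) = range (r + 1) := by
    ext s; simp only [mem_filter, mem_range]; omega
  rw [Fin.sum_univ_eq_sum_range (fun s => if s ≤ (r : ℕ) then
    ∑ t, H (r - s) ρ t * u s t else 0), ← sum_filter, hr, syndrome, Finset.sum_apply]
  rfl

end SlidingParity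

section ColumnDistance

variable {R : Type*} [Ring R] {m n : ℕ}

def colWeights (H : ℕ → Matrix (Fin m) (Fin n) R) (j : ℕ) : Set ℕ :=
  {w | ∃ u : ℕ → Fin n → R, (∀ r ≤ j, syndrome H u r = 0) ∧ u 0 ≠ 0 ∧
    ∑ r ∈ range (j + 1), hammingWt (u r) = w}

theorem colDist_eq_sInf_colWeights {F : Type*} [Field F] {n k : ℕ} (hk : k < n)
    (H : ℕ → Matrix (Fin (n - k)) (Fin n) F) (j : ℕ) :
    colDist n k hk H j = sInf (colWeights H j) := by
  refine congrArg sInf (Set.ext fun w => ⟨?_, ?_⟩)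
  · rintro ⟨v, hv, hv0, rfl⟩
    obtain ⟨u, rfl⟩ := exists_blockVec_eq v
    rw [slidingParity_mulVec_blockVec, blockVec_eq_zero_iff] at hv
    exact ⟨u, fun r hr => hv r (Nat.lt_succ_of_le hr),
      (exists_blockVec_ne_zero_iff j.succ_pos).mp hv0, (hammingWt_blockVec _ _).symm⟩
  · rintro ⟨u, hu, hu0, rfl⟩
    refine ⟨blockVec (j + 1) u, ?_, (exists_blockVec_ne_zero_iff j.succ_pos).mpr hu0,
      hammingWt_blockVec _ _⟩
    rw [slidingParity_mulVec_blockVec, blockVec_eq_zero_iff]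
    exact fun r hr => hu r (Nat.le_of_lt_succ hr)

variable {H : ℕ → Matrix (Fin m) (Fin n) R} {S : Finset (Fin n)}

theorem sInf_colWeights_le_add (hS : ∀ b, ∃ x, H 0 *ᵥ x = b ∧ ∀ t ∉ S, x t = 0)
    {i j w : ℕ} (hij : i ≤ j) (hw : w ∈ colWeights H i) :
    sInf (colWeights H j) ≤ w + (j - i) * #S := by
  obtain ⟨u, hu, hu0, rfl⟩ := hw
  obtain ⟨u', hu'0, hsyn, hwt⟩ := exists_codeword_extension_weight_le hS hu hij
  have hmem : _ ∈ colWeights H j := ⟨u', hsyn, hu'0 ▸ hu0, rfl⟩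
  exact (Nat.sInf_le hmem).trans hwt

theorem exists_mem_colWeights_le [Nontrivial R]
    (hS : ∀ b, ∃ x, H 0 *ᵥ x = b ∧ ∀ t ∉ S, x t = 0) {t₀ : Fin n} (ht₀ : t₀ ∉ S) (i : ℕ) :
    ∃ w ∈ colWeights H i, w ≤ (i + 1) * #S + 1 := by
  obtain ⟨x, hx, hxS⟩ := hS (H 0 *ᵥ Pi.single t₀ 1)
  set e : Fin n → R := Pi.single t₀ 1 - x
  have he : H 0 *ᵥ e = 0 := by rw [mulVec_sub, hx, sub_self]
  have he₀ : e t₀ = 1 := by simp [e, hxS t₀ ht₀]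
  have hwt : hammingWt e ≤ #S + 1 := by
    refine (hammingWt_le_card (S := insert t₀ S) fun t ht => ?_).trans (card_insert_le _ _)
    rw [mem_insert, not_or] at ht
    simp [e, Pi.single_eq_of_ne ht.1, hxS t ht.2]
  have hu : ∀ r ≤ 0, syndrome H (Pi.single 0 e) r = 0 := by
    rintro r hr
    simp [Nat.le_zero.mp hr, syndrome, he]
  obtain ⟨u', hu'0, hsyn, hwt'⟩ := exists_codeword_extension_weight_le hS hu (Nat.zero_le i)
  refine ⟨_, ⟨u', hsyn, fun h => ?_, rfl⟩, hwt'.trans ?_⟩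
  · simpa [hu'0, he₀] using congrFun h t₀
  · simp only [zero_add, sum_range_one, Pi.single_eq_same, Nat.sub_zero]
    nlinarith

theorem sInf_colWeights_eq_of_le [Nontrivial R]
    (hS : ∀ b, ∃ x, H 0 *ᵥ x = b ∧ ∀ t ∉ S, x t = 0) {t₀ : Fin n} (ht₀ : t₀ ∉ S) {i j : ℕ}
    (hij : i ≤ j) (hj : sInf (colWeights H j) = (j + 1) * #S + 1) :
    sInf (colWeights H i) = (i + 1) * #S + 1 := by
  obtain ⟨w₀, hw₀, hw₀le⟩ := exists_mem_colWeights_le hS ht₀ i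
  have hsplit : (j + 1) * #S = (i + 1) * #S + (j - i) * #S := by
    rw [← add_mul]; congr 1; omega
  refine le_antisymm ((Nat.sInf_le hw₀).trans hw₀le) (le_csInf ⟨w₀, hw₀⟩ fun w hw => ?_)
  have := sInf_colWeights_le_add hS hij hw
  omega

end ColumnDistance

/-- For an (n,k) convolutional code (parity-check matrix with
H_0 of full row rank n-k), if the j-th column distance attains the maximal value
(j+1)(n-k)+1, then d_i^c = (i+1)(n-k)+1 for every i ≤ j. -/
theorem stmt11 {F : Type*} [Field F] (n k : ℕ) (hk0 : 0 < k) (hk : k < n)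
    (H : ℕ → Matrix (Fin (n - k)) (Fin n) F)
    (hrank : (H 0).rank = n - k) (j : ℕ)
    (hj : colDist n k hk H j = (j + 1) * (n - k) + 1) :
    ∀ i ≤ j, colDist n k hk H i = (i + 1) * (n - k) + 1 := by
  obtain ⟨S, hScard, hS⟩ := (H 0).exists_finset_card_eq_forall_exists_mulVec_eq hrank
  obtain ⟨t₀, -, ht₀⟩ := exists_mem_notMem_of_card_lt_card (s := S) (t := univ)
    (by rw [hScard, card_univ, Fintype.card_fin]; omega)
  intro i hij
  rw [colDist_eq_sInf_colWeights] at hj ⊢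
  simpa only [hScard] using sInf_colWeights_eq_of_le hS ht₀ hij (by rwa [hScard])
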